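/- Let λ, μ_b, μ_e be reals with 0 < λ < μ_b < μ_e, define f(H) = H/(μ_e − λH) + (1−H)/(μ_b − λ(1−H)) and H_cpl = ((μ_e − √(μ_e μ_b))·√μ_b + λ·√μ_e) / (λ·(√μ_b + √μ_e)). Then the derivative of f vanishes at H_cpl; equivalently, μ_e/(μ_e − λ·H_cpl)² = μ_b/(μ_b − λ·(1 − H_cpl))². -/

import Mathlib

/-! With `a = √μ_b`, `b = √μ_e` and `S = μ_b + μ_e − λ`, the closed form gives
`μ_e − λ H_cpl = b S / (a + b)` and, since `1 − H_cpl` is the same closed form with `μ_b` and `μ_e`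
exchanged, `μ_b − λ (1 − H_cpl) = a S / (a + b)`. Hence both terms of `f'(H_cpl)` equal
`((a + b) / S)²`, and they cancel. -/

open Real

noncomputable def cplHitRatio (lam mub mue : ℝ) : ℝ :=
  ((mue - √(mue * mub)) * √mub + lam * √mue) / (lam * (√mub + √mue))

theorem hasDerivAt_div_const_sub_mul {m lam H : ℝ} (h : m - lam * H ≠ 0) :
    HasDerivAt (fun x => x / (m - lam * x)) (m / (m - lam * H) ^ 2) H := by
  have hden : HasDerivAt (fun x => m - lam * x) (-lam) H := by
    simpa using ((hasDerivAt_id H).const_mul lam).const_sub m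
  refine ((hasDerivAt_id' H).div hden h).congr_deriv ?_
  ring

theorem hasDerivAt_downloadTime {lam mub mue H : ℝ} (he : mue - lam * H ≠ 0)
    (hb : mub - lam * (1 - H) ≠ 0) :
    HasDerivAt (fun x => x / (mue - lam * x) + (1 - x) / (mub - lam * (1 - x)))
      (mue / (mue - lam * H) ^ 2 - mub / (mub - lam * (1 - H)) ^ 2) H := by
  have hcloud := (hasDerivAt_div_const_sub_mul hb).comp H ((hasDerivAt_id H).const_sub 1)
  refine ((hasDerivAt_div_const_sub_mul he).add hcloud).congr_deriv ?_
  ring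

section

variable {lam mub mue : ℝ}

theorem one_sub_cplHitRatio (hlam : lam ≠ 0) (hmub : 0 ≤ mub) (hmue : 0 < mue) :
    1 - cplHitRatio lam mub mue = cplHitRatio lam mue mub := by
  have hsum : √mub + √mue ≠ 0 := by positivity
  rw [cplHitRatio, cplHitRatio, mul_comm mub, sqrt_mul' _ hmub, add_comm (√mue)]
  field_simp
  linear_combination √mue * sq_sqrt hmub + √mub * sq_sqrt hmue.le

theorem sub_mul_cplHitRatio (hlam : lam ≠ 0) (hmub : 0 ≤ mub) (hmue : 0 < mue) :
    mue - lam * cplHitRatio lam mub mue = √mue * (mub + mue - lam) / (√mub + √mue) := by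
  have hsum : √mub + √mue ≠ 0 := by positivity
  rw [cplHitRatio, sqrt_mul' _ hmub]
  field_simp
  linear_combination √mue * sq_sqrt hmub

theorem div_sq_sub_mul_cplHitRatio (hlam : lam ≠ 0) (hmub : 0 ≤ mub) (hmue : 0 < mue) :
    mue / (mue - lam * cplHitRatio lam mub mue) ^ 2 = ((√mub + √mue) / (mub + mue - lam)) ^ 2 := by
  rw [sub_mul_cplHitRatio hlam hmub hmue, div_pow, div_pow, mul_pow, sq_sqrt hmue.le]
  field_simp

end

/-- The derivative of the per-BS average download time `f` vanishes at the CPL-optimal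
edge-cache-hit ratio `H_cpl`; equivalently `μe/(μe − λH_cpl)² = μb/(μb − λ(1−H_cpl))²`. -/
theorem hcpl_is_stationary_point
    (lam mub mue : ℝ) (h0 : 0 < lam) (h1 : lam < mub) (h2 : mub < mue)
    (f : ℝ → ℝ)
    (hf : ∀ H, f H = H / (mue - lam * H) + (1 - H) / (mub - lam * (1 - H)))
    (Hcpl : ℝ)
    (hH : Hcpl = ((mue - Real.sqrt (mue * mub)) * Real.sqrt mub + lam * Real.sqrt mue) /
      (lam * (Real.sqrt mub + Real.sqrt mue))) :
    deriv f Hcpl = 0 ∧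
    mue / (mue - lam * Hcpl) ^ 2 = mub / (mub - lam * (1 - Hcpl)) ^ 2 := by
  have hmub : 0 < mub := h0.trans h1
  have hmue : 0 < mue := hmub.trans h2
  have hS : 0 < mub + mue - lam := by linarith
  change Hcpl = cplHitRatio lam mub mue at hH
  subst hH
  have hswap := one_sub_cplHitRatio h0.ne' hmub.le hmue
  have hstat : mue / (mue - lam * cplHitRatio lam mub mue) ^ 2 =
      mub / (mub - lam * (1 - cplHitRatio lam mub mue)) ^ 2 := by
    rw [hswap, div_sq_sub_mul_cplHitRatio h0.ne' hmub.le hmue,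
      div_sq_sub_mul_cplHitRatio h0.ne' hmue.le hmub, add_comm (√mue), add_comm mue]
  have he : mue - lam * cplHitRatio lam mub mue ≠ 0 := by
    rw [sub_mul_cplHitRatio h0.ne' hmub.le hmue]; positivity
  have hb : mub - lam * (1 - cplHitRatio lam mub mue) ≠ 0 := by
    rw [hswap, sub_mul_cplHitRatio h0.ne' hmue.le hmub, add_comm mue]; positivity
  refine ⟨?_, hstat⟩
  rw [funext hf, (hasDerivAt_downloadTime he hb).deriv, hstat, sub_self]
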